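/- Let μ > 0 and let G_μ(α) = Φ(Φ^{-1}(1−α) − μ) be the trade-off function between N(0,1) and N(μ,1), where Φ is the standard Gaussian CDF. Define g(x) = |G_μ'(x)| − 1. Then ∫₀¹ g(x)² dx = e^{μ²} − 1. -/
import Mathlib

open MeasureTheory Real Set Filter

noncomputable def gpdf (x : ℝ) : ℝ := Real.exp (-x ^ 2 / 2) / Real.sqrt (2 * π)

lemma gpdf_pos (x : ℝ) : 0 < gpdf x :=
  div_pos (Real.exp_pos _) (Real.sqrt_pos.2 (by positivity))

lemma gpdf_cont : Continuous gpdf := by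
  unfold gpdf; fun_prop

lemma gpdf_integrable : Integrable gpdf := by
  have h : Integrable (fun x : ℝ => Real.exp (-(1/2 : ℝ) * x ^ 2)) :=
    integrable_exp_neg_mul_sq (by norm_num)
  have : Integrable (fun x : ℝ => Real.exp (-x ^ 2 / 2)) := by
    convert h using 2 with x; ring_nf
  exact this.div_const _

lemma gpdf_total : ∫ x : ℝ, gpdf x = 1 := by
  unfold gpdf
  rw [integral_div]
  have h := integral_gaussian (1/2 : ℝ)
  have h2 : (∫ x : ℝ, Real.exp (-x ^ 2 / 2)) = ∫ x : ℝ, Real.exp (-(1/2 : ℝ) * x ^ 2) := by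
    congr 1 with x; ring_nf
  rw [h2, h, show (π / (1/2 : ℝ)) = 2 * π by ring]
  exact div_self (by positivity)

lemma gpdf_shift_integrable (c : ℝ) : Integrable (fun x : ℝ => gpdf (x - c)) :=
  gpdf_integrable.comp_sub_right c

lemma gpdf_shift_total (c : ℝ) : ∫ x : ℝ, gpdf (x - c) = 1 := by
  rw [integral_sub_right_eq_self gpdf c]; exact gpdf_total

lemma gpdf_ratio (a b : ℝ) : gpdf a / gpdf b = Real.exp (-a^2/2 + b^2/2) := by
  have h1 : Real.exp (-b^2/2) ≠ 0 := (Real.exp_pos _).ne'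
  have hs : Real.sqrt (2*π) ≠ 0 := by positivity
  have : gpdf a / gpdf b = Real.exp (-a^2/2) / Real.exp (-b^2/2) := by
    unfold gpdf; field_simp
  rw [this, ← Real.exp_sub]; congr 1; ring

lemma gauss_pointwise (μ t : ℝ) :
    gpdf t * (Real.exp (μ * t - μ ^ 2 / 2) - 1) ^ 2
      = Real.exp (μ ^ 2) * gpdf (t - 2*μ) - (2:ℝ) * gpdf (t - μ) + gpdf t := by
  unfold gpdf
  have h1 : Real.exp (-t^2/2) * Real.exp (μ*t - μ^2/2) ^ 2
      = Real.exp (μ^2) * Real.exp (-(t-2*μ)^2/2) := by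
    rw [pow_two (Real.exp _), ← Real.exp_add, ← Real.exp_add, ← Real.exp_add]
    congr 1; ring
  have h2 : Real.exp (-t^2/2) * Real.exp (μ*t - μ^2/2) = Real.exp (-(t-μ)^2/2) := by
    rw [← Real.exp_add]; congr 1; ring
  have hnum : Real.exp (-t^2/2) * (Real.exp (μ*t - μ^2/2) - 1)^2
      = Real.exp (μ^2) * Real.exp (-(t-2*μ)^2/2) - 2 * Real.exp (-(t-μ)^2/2)
        + Real.exp (-t^2/2) := by
    linear_combination h1 - 2 * h2
  rw [div_mul_eq_mul_div, ← mul_div_assoc, ← mul_div_assoc, ← sub_div, ← add_div, hnum]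

lemma gauss_moment (μ : ℝ) :
    ∫ t : ℝ, gpdf t * (Real.exp (μ * t - μ ^ 2 / 2) - 1) ^ 2 = Real.exp (μ ^ 2) - 1 := by
  have hrw : (fun t : ℝ => gpdf t * (Real.exp (μ * t - μ ^ 2 / 2) - 1) ^ 2)
      = fun t => Real.exp (μ ^ 2) * gpdf (t - 2*μ) - (2:ℝ) * gpdf (t - μ) + gpdf t := by
    funext t; exact gauss_pointwise μ t
  rw [hrw]
  have i1 : Integrable (fun t : ℝ => Real.exp (μ ^ 2) * gpdf (t - 2*μ)) :=
    (gpdf_shift_integrable (2*μ)).const_mul _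
  have i2 : Integrable (fun t : ℝ => (2:ℝ) * gpdf (t - μ)) :=
    (gpdf_shift_integrable μ).const_mul _
  have i12 : Integrable (fun t : ℝ => Real.exp (μ ^ 2) * gpdf (t - 2*μ) - (2:ℝ) * gpdf (t - μ)) :=
    i1.sub i2
  rw [integral_add i12 gpdf_integrable, integral_sub i1 i2,
    integral_const_mul, integral_const_mul, gpdf_shift_total, gpdf_shift_total, gpdf_total]
  ring

lemma cdf_hasDerivAt (t : ℝ) :
    HasDerivAt (fun s => ∫ x in Iic s, gpdf x) (gpdf t) t := by
  have hd : HasDerivAt (fun u => (∫ x in Iic (0:ℝ), gpdf x) + ∫ x in (0:ℝ)..u, gpdf x)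
      (gpdf t) t := by
    refine HasDerivAt.const_add _ ?_
    exact intervalIntegral.integral_hasDerivAt_right
      (gpdf_integrable.intervalIntegrable)
      (gpdf_cont.stronglyMeasurable.stronglyMeasurableAtFilter)
      gpdf_cont.continuousAt
  have heq : (fun s => ∫ x in Iic s, gpdf x)
      = fun u => (∫ x in Iic (0:ℝ), gpdf x) + ∫ x in (0:ℝ)..u, gpdf x := by
    funext u
    have := intervalIntegral.integral_Iic_sub_Iic
      (gpdf_integrable.integrableOn (s := Iic (0:ℝ)))
      (gpdf_integrable.integrableOn (s := Iic u))
    linarith [this]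
  rw [heq]; exact hd

lemma cdf_pos (t : ℝ) : 0 < ∫ x in Iic t, gpdf x := by
  rw [setIntegral_pos_iff_support_of_nonneg_ae
    (Filter.Eventually.of_forall fun x => (gpdf_pos x).le)
    (gpdf_integrable.integrableOn)]
  have : Function.support gpdf = univ := by
    ext x; simp [Function.mem_support, (gpdf_pos x).ne']
  rw [this, univ_inter]
  simp [Real.volume_Iic]

lemma cdf_lt_one (t : ℝ) : (∫ x in Iic t, gpdf x) < 1 := by
  have hsplit : (∫ x in Iic t, gpdf x) + ∫ x in Ioi t, gpdf x = 1 := by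
    rw [intervalIntegral.integral_Iic_add_Ioi gpdf_integrable.integrableOn
      gpdf_integrable.integrableOn]
    exact gpdf_total
  have hpos : 0 < ∫ x in Ioi t, gpdf x := by
    rw [setIntegral_pos_iff_support_of_nonneg_ae
      (Filter.Eventually.of_forall fun x => (gpdf_pos x).le)
      (gpdf_integrable.integrableOn)]
    have : Function.support gpdf = univ := by
      ext x; simp [Function.mem_support, (gpdf_pos x).ne']
    rw [this, univ_inter]
    simp [Real.volume_Ioi]
  linarith

open MeasureTheory Real in
theorem tradeoff_second_moment (μ : ℝ) (hμ : 0 < μ)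
    (Φ Φinv : ℝ → ℝ)
    (hΦ : ∀ t : ℝ, Φ t = ∫ x in Set.Iic t, Real.exp (-x ^ 2 / 2) / Real.sqrt (2 * π))
    (hinv₁ : ∀ α ∈ Set.Ioo (0 : ℝ) 1, Φ (Φinv α) = α)
    (hinv₂ : ∀ t : ℝ, Φinv (Φ t) = t)
    (G : ℝ → ℝ) (hG : ∀ α : ℝ, G α = Φ (Φinv (1 - α) - μ))
    (g : ℝ → ℝ) (hg : ∀ x : ℝ, g x = |deriv G x| - 1) :
    (∫ x in Set.Ioo (0 : ℝ) 1, (g x) ^ 2) = Real.exp (μ ^ 2) - 1 := by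
  have hΦ' : Φ = fun s => ∫ x in Iic s, gpdf x := funext hΦ
  have hd : ∀ t, HasDerivAt Φ (gpdf t) t := by
    intro t; rw [hΦ']; exact cdf_hasDerivAt t
  have h0 : ∀ t, 0 < Φ t := by intro t; rw [hΦ']; exact cdf_pos t
  have h1t : ∀ t, Φ t < 1 := by intro t; rw [hΦ']; exact cdf_lt_one t
  have hmono : StrictMono Φ := by
    apply strictMono_of_deriv_pos
    intro x; rw [(hd x).deriv]; exact gpdf_pos x
  -- continuity and derivative of the inverse
  have hder : ∀ α ∈ Ioo (0:ℝ) 1, HasDerivAt Φinv (gpdf (Φinv α))⁻¹ α := by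
    intro α hα
    have hΦt₀ : Φ (Φinv α) = α := hinv₁ α hα
    have hc : ContinuousAt Φinv α := by
      rw [ContinuousAt]
      apply tendsto_order.2
      constructor
      · intro a ha
        have hlt : Φ a < α := hΦt₀ ▸ hmono ha
        filter_upwards [Ioo_mem_nhds hlt hα.2, Ioo_mem_nhds hα.1 hα.2] with y hy hy01
        have : Φ a < Φ (Φinv y) := by rw [hinv₁ y hy01]; exact hy.1
        exact hmono.lt_iff_lt.mp this
      · intro b hb
        have hlt : α < Φ b := hΦt₀ ▸ hmono hb
        filter_upwards [Ioo_mem_nhds hα.1 hlt, Ioo_mem_nhds hα.1 hα.2] with y hy hy01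
        have : Φ (Φinv y) < Φ b := by rw [hinv₁ y hy01]; exact hy.2
        exact hmono.lt_iff_lt.mp this
    exact HasDerivAt.of_local_left_inverse hc (hd (Φinv α)) (gpdf_pos _).ne'
      (Filter.eventually_of_mem (Ioo_mem_nhds hα.1 hα.2) fun y hy => hinv₁ y hy)
  -- derivative of G on (0,1)
  have hGd : ∀ α ∈ Ioo (0:ℝ) 1,
      HasDerivAt G (gpdf (Φinv (1-α) - μ) * ((gpdf (Φinv (1-α)))⁻¹ * (-1))) α := by
    intro α hα
    have hα' : (1 - α) ∈ Ioo (0:ℝ) 1 := ⟨by linarith [hα.2], by linarith [hα.1]⟩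
    have h1 : HasDerivAt (fun x : ℝ => 1 - x) (-1) α := by
      simpa using (hasDerivAt_id α).const_sub 1
    have h3 : HasDerivAt (fun x : ℝ => Φinv (1 - x)) ((gpdf (Φinv (1-α)))⁻¹ * (-1)) α :=
      (hder (1-α) hα').comp α h1
    have h4 := h3.sub_const μ
    have h5 := (hd (Φinv (1-α) - μ)).comp α h4
    have hGfun : G = fun x => Φ (Φinv (1 - x) - μ) := funext hG
    rw [hGfun]
    exact h5
  -- value of g on (0,1)
  have hgval : ∀ α ∈ Ioo (0:ℝ) 1,
      g α = Real.exp (μ * Φinv (1-α) - μ^2/2) - 1 := by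
    intro α hα
    rw [hg, (hGd α hα).deriv]
    have hratio : gpdf (Φinv (1-α) - μ) * ((gpdf (Φinv (1-α)))⁻¹ * (-1))
        = -(gpdf (Φinv (1-α) - μ) / gpdf (Φinv (1-α))) := by
      field_simp
    rw [hratio, abs_neg, abs_of_pos (div_pos (gpdf_pos _) (gpdf_pos _)), gpdf_ratio]
    congr 2; ring
  -- change of variables
  have himg : (fun t => 1 - Φ t) '' univ = Ioo (0:ℝ) 1 := by
    ext α
    simp only [image_univ, mem_range, mem_Ioo]
    constructor
    · rintro ⟨t, rfl⟩
      exact ⟨by linarith [h1t t], by linarith [h0 t]⟩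
    · rintro ⟨hα0, hα1⟩
      refine ⟨Φinv (1 - α), ?_⟩
      rw [hinv₁ (1 - α) ⟨by linarith, by linarith⟩]; ring
  have hinj : InjOn (fun t => 1 - Φ t) univ := by
    intro a _ b _ hab
    have : Φ a = Φ b := by simpa using hab
    exact hmono.injective this
  have hCoV := integral_image_eq_integral_abs_deriv_smul (f := fun t => 1 - Φ t)
      (f' := fun t => -(gpdf t)) MeasurableSet.univ
      (fun x _ => ((hd x).const_sub 1).hasDerivWithinAt)
      hinj (fun α => (Real.exp (μ * Φinv (1-α) - μ^2/2) - 1)^2)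
  rw [himg] at hCoV
  calc (∫ x in Set.Ioo (0 : ℝ) 1, (g x) ^ 2)
      = ∫ x in Set.Ioo (0 : ℝ) 1, (Real.exp (μ * Φinv (1-x) - μ^2/2) - 1)^2 := by
        apply setIntegral_congr_fun measurableSet_Ioo
        intro x hx; dsimp only; rw [hgval x hx]
    _ = ∫ t in (univ : Set ℝ), |-(gpdf t)| • (Real.exp (μ * Φinv (1 - (1 - Φ t)) - μ^2/2) - 1)^2 := hCoV
    _ = ∫ t : ℝ, gpdf t * (Real.exp (μ * t - μ^2/2) - 1)^2 := by
        rw [Measure.restrict_univ]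
        congr 1 with t
        rw [sub_sub_cancel, hinv₂ t, abs_neg, abs_of_pos (gpdf_pos t), smul_eq_mul]
    _ = Real.exp (μ ^ 2) - 1 := gauss_moment μ
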